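/- arXiv:2301.00108 — 3 statements merged into one kernel-verified Lean document; each statement's English description precedes it below -/
import Mathlib

section
/- (Core Support Condition) For every finite simple graph G, every vertex i, and every natural number k, the vertex i belongs to the k-core V_k(G) if and only if i has at least k neighbors j with core value C(j,G) ≥ k, i.e., if and only if |SN(i,k,G)| ≥ k. -/
/-- A set `S` of vertices is `k`-supported in `G` if every vertex of `S`
has at least `k` neighbors inside `S`. -/
def kSupported {V : Type*} (G : SimpleGraph V) (k : ℕ) (S : Set V) : Prop :=
  ∀ i ∈ S, k ≤ {j | j ∈ S ∧ G.Adj i j}.ncard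

/-- The `k`-core of `G`: the union of all `k`-supported sets. -/
def kCore {V : Type*} (G : SimpleGraph V) (k : ℕ) : Set V :=
  ⋃₀ {S | kSupported G k S}

/-- The core value `C(i,G)` of a vertex `i`: the largest `k` with `i ∈ V_k(G)`. -/
noncomputable def coreValue {V : Type*} (G : SimpleGraph V) (i : V) : ℕ :=
  sSup {k | i ∈ kCore G k}

/-- The supportive neighbors of `i` at level `k`:
neighbors `j` of `i` with core value at least `k`. -/
def SN {V : Type*} (G : SimpleGraph V) (i : V) (k : ℕ) : Set V :=
  {j | G.Adj i j ∧ k ≤ coreValue G j}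

/-- `SN(i,G)`: abbreviation for `SN(i, C(i,G), G)`. -/
noncomputable def SNc {V : Type*} (G : SimpleGraph V) (i : V) : Set V :=
  SN G i (coreValue G i)

/-- The core strength `CS(i,G) = |SN(i,G)| - C(i,G) + 1`. -/
noncomputable def CS {V : Type*} (G : SimpleGraph V) (i : V) : ℕ :=
  (SNc G i).ncard - coreValue G i + 1

lemma kSupported_kCore {V : Type*} [Fintype V] (G : SimpleGraph V) (k : ℕ) :
    kSupported G k (kCore G k) := by
  intro i hi
  obtain ⟨S, hS, hiS⟩ := hi
  refine (hS i hiS).trans (Set.ncard_le_ncard ?_ (Set.toFinite _))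
  rintro j ⟨hjS, hadj⟩
  exact ⟨⟨S, hS, hjS⟩, hadj⟩

lemma kCore_antitone {V : Type*} (G : SimpleGraph V) {m k : ℕ} (h : m ≤ k) :
    kCore G k ⊆ kCore G m := by
  rintro i ⟨S, hS, hiS⟩
  exact ⟨S, fun j hj => h.trans (hS j hj), hiS⟩

lemma mem_kCore_iff_le_coreValue {V : Type*} [Fintype V] (G : SimpleGraph V)
    (j : V) (k : ℕ) : j ∈ kCore G k ↔ k ≤ coreValue G j := by
  have hbdd : BddAbove {k | j ∈ kCore G k} := by
    refine ⟨Fintype.card V, fun m hm => ?_⟩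
    have := kSupported_kCore G m j hm
    calc m ≤ _ := this
      _ ≤ Fintype.card V := by
        simpa [Set.ncard_univ, Nat.card_eq_fintype_card] using Set.ncard_le_ncard (Set.subset_univ {j' | j' ∈ kCore G m ∧ G.Adj j j'}) (Set.toFinite _)
  constructor
  · intro h
    exact le_csSup hbdd h
  · intro h
    have h0 : j ∈ kCore G 0 :=
      ⟨Set.univ, fun i _ => Nat.zero_le _, Set.mem_univ j⟩
    have hne : {k | j ∈ kCore G k}.Nonempty := ⟨0, h0⟩
    have : coreValue G j ∈ {k | j ∈ kCore G k} := Nat.sSup_mem hne hbdd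
    exact kCore_antitone G h this

theorem stmt_2 {V : Type*} [Fintype V] (G : SimpleGraph V) (i : V) (k : ℕ) :
    i ∈ kCore G k ↔ k ≤ (SN G i k).ncard := by
  constructor
  · intro hi
    refine (kSupported_kCore G k i hi).trans (Set.ncard_le_ncard ?_ (Set.toFinite _))
    rintro j ⟨hjc, hadj⟩
    exact ⟨hadj, (mem_kCore_iff_le_coreValue G j k).mp hjc⟩
  · intro hk
    refine ⟨kCore G k ∪ {i}, ?_, Or.inr rfl⟩
    intro x hx
    rcases hx with hx | hx
    · refine (kSupported_kCore G k x hx).trans (Set.ncard_le_ncard ?_ (Set.toFinite _))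
      rintro j ⟨hj, hadj⟩
      exact ⟨Or.inl hj, hadj⟩
    · subst hx
      refine hk.trans (Set.ncard_le_ncard ?_ (Set.toFinite _))
      rintro j ⟨hadj, hcv⟩
      exact ⟨Or.inl ((mem_kCore_iff_le_coreValue G j k).mpr hcv), hadj⟩
end

section
/- Let e = {i,j} be an edge of a finite simple graph G and set k_min = min(C(i,G), C(j,G)). Then for every natural number k with k ≠ k_min, the k-core of G−e equals the k-core of G, i.e., V_k(G−e) = V_k(G). -/
section Aux

variable {V : Type*} [Fintype V] (G : SimpleGraph V)

lemma kSupported_mono {k m : ℕ} (h : m ≤ k) {S : Set V} (hS : kSupported G k S) :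
    kSupported G m S := fun i hi => le_trans h (hS i hi)

lemma kCore_anti {k m : ℕ} (h : m ≤ k) : kCore G k ⊆ kCore G m := by
  intro x hx
  obtain ⟨S, hS, hxS⟩ := hx
  exact ⟨S, kSupported_mono G h hS, hxS⟩

lemma kCore_supported (k : ℕ) : kSupported G k (kCore G k) := by
  intro x hx
  obtain ⟨S, hS, hxS⟩ := hx
  refine le_trans (hS x hxS) (Set.ncard_le_ncard ?_ (Set.toFinite _))
  rintro w ⟨hw1, hw2⟩
  exact ⟨⟨S, hS, hw1⟩, hw2⟩

lemma bddAbove_coreSet (x : V) : BddAbove {k | x ∈ kCore G k} := by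
  refine ⟨Fintype.card V, fun k hk => ?_⟩
  obtain ⟨S, hS, hxS⟩ := hk
  refine le_trans (hS x hxS) (le_trans (Set.ncard_le_ncard (Set.subset_univ _)
    (Set.toFinite _)) ?_)
  rw [Set.ncard_univ, Nat.card_eq_fintype_card]

lemma le_coreValue {k : ℕ} {x : V} (h : x ∈ kCore G k) : k ≤ coreValue G x :=
  le_csSup (bddAbove_coreSet G x) h

lemma mem_kCore_of_le_coreValue {k : ℕ} {x : V} (h : k ≤ coreValue G x) :
    x ∈ kCore G k := by
  have h0 : x ∈ kCore G 0 := ⟨Set.univ, fun v _ => Nat.zero_le _, Set.mem_univ x⟩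
  have hne : {n | x ∈ kCore G n}.Nonempty := ⟨0, h0⟩
  have hmem : coreValue G x ∈ {n | x ∈ kCore G n} :=
    Nat.sSup_mem hne (bddAbove_coreSet G x)
  exact kCore_anti G h hmem

lemma support_del_high {i j : V} (hij : G.Adj i j) {k : ℕ} (hi : i ∉ kCore G k) :
    kSupported (G.deleteEdges {s(i, j)}) k (kCore G k) := by
  intro v hv
  refine le_trans (kCore_supported G k v hv) (Set.ncard_le_ncard ?_ (Set.toFinite _))
  rintro w ⟨hw, hadj⟩
  refine ⟨hw, (SimpleGraph.deleteEdges_adj).2 ⟨hadj, ?_⟩⟩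
  simp only [Set.mem_singleton_iff, Sym2.eq_iff]
  rintro (⟨rfl, rfl⟩ | ⟨rfl, rfl⟩)
  · exact hi hv
  · exact hi hw

lemma support_del_low_at {i j : V} (hij : G.Adj i j) {k : ℕ}
    (hi : i ∈ kCore G (k + 1)) :
    k ≤ {w | w ∈ kCore G k ∧ (G.deleteEdges {s(i, j)}).Adj i w}.ncard := by
  set A := {w | w ∈ kCore G (k + 1) ∧ G.Adj i w} with hA
  have hAcard : k + 1 ≤ A.ncard := kCore_supported G (k + 1) i hi
  have hsub : A \ {j} ⊆ {w | w ∈ kCore G k ∧ (G.deleteEdges {s(i, j)}).Adj i w} := by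
    rintro w ⟨⟨hw1, hw2⟩, hwj⟩
    refine ⟨kCore_anti G (Nat.le_succ k) hw1,
      (SimpleGraph.deleteEdges_adj).2 ⟨hw2, ?_⟩⟩
    simp only [Set.mem_singleton_iff, Sym2.eq_iff]
    rintro (⟨-, rfl⟩ | ⟨rfl, rfl⟩)
    · exact hwj rfl
    · exact hij.ne rfl
  have h1 : A.ncard ≤ (A \ {j}).ncard + ({j} : Set V).ncard :=
    Set.ncard_le_ncard_diff_add_ncard A {j} (Set.toFinite _)
  rw [Set.ncard_singleton] at h1
  have h2 : k ≤ (A \ {j}).ncard := by omega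
  exact le_trans h2 (Set.ncard_le_ncard hsub (Set.toFinite _))

lemma support_del_low {i j : V} (hij : G.Adj i j) {k : ℕ}
    (hi : i ∈ kCore G (k + 1)) (hj : j ∈ kCore G (k + 1)) :
    kSupported (G.deleteEdges {s(i, j)}) k (kCore G k) := by
  intro v hv
  by_cases hvi : v = i
  · subst hvi; exact support_del_low_at G hij hi
  by_cases hvj : v = j
  · subst hvj
    have := support_del_low_at G hij.symm hj
    rwa [Sym2.eq_swap] at this
  · refine le_trans (kCore_supported G k v hv)
      (Set.ncard_le_ncard ?_ (Set.toFinite _))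
    rintro w ⟨hw, hadj⟩
    refine ⟨hw, (SimpleGraph.deleteEdges_adj).2 ⟨hadj, ?_⟩⟩
    simp only [Set.mem_singleton_iff, Sym2.eq_iff]
    rintro (⟨rfl, rfl⟩ | ⟨rfl, rfl⟩)
    · exact hvi rfl
    · exact hvj rfl

end Aux

theorem stmt_7 {V : Type*} [Fintype V] (G : SimpleGraph V) (i j : V)
    (hij : G.Adj i j) (k : ℕ)
    (hk : k ≠ min (coreValue G i) (coreValue G j)) :
    kCore (G.deleteEdges {s(i, j)}) k = kCore G k := by
  apply Set.Subset.antisymm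
  · rintro x ⟨S, hS, hxS⟩
    refine ⟨S, fun v hv => le_trans (hS v hv)
      (Set.ncard_le_ncard ?_ (Set.toFinite _)), hxS⟩
    rintro w ⟨hw, hadj⟩
    exact ⟨hw, ((SimpleGraph.deleteEdges_adj).1 hadj).1⟩
  · intro x hx
    have hsupp : kSupported (G.deleteEdges {s(i, j)}) k (kCore G k) := by
      rcases lt_or_gt_of_ne hk with hlt | hgt
      · have hi : i ∈ kCore G (k + 1) :=
          mem_kCore_of_le_coreValue G (le_trans hlt (min_le_left _ _))
        have hj : j ∈ kCore G (k + 1) :=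
          mem_kCore_of_le_coreValue G (le_trans hlt (min_le_right _ _))
        exact support_del_low G hij hi hj
      · rcases min_cases (coreValue G i) (coreValue G j) with ⟨heq, -⟩ | ⟨heq, -⟩
        · have hi : i ∉ kCore G k := fun h => by
            have := le_coreValue G h; omega
          exact support_del_high G hij hi
        · have hj : j ∉ kCore G k := fun h => by
            have := le_coreValue G h; omega
          have := support_del_high G hij.symm hj
          rwa [Sym2.eq_swap] at this
    exact ⟨kCore G k, hsupp, hx⟩
end

section
/- Let e = {i,j} be an edge of a finite simple graph G with C(i,G) ≥ C(j,G) and CS(j,G) = 1. Then removing e makes j collapse by exactly one core level: C(j, G−e) = C(j,G) − 1. -/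
section aux
variable {V : Type*} [Fintype V]

lemma aux_kSupported_anti {G : SimpleGraph V} {k k' : ℕ} (h : k' ≤ k) {S : Set V}
    (hS : kSupported G k S) : kSupported G k' S :=
  fun v hv => h.trans (hS v hv)

lemma aux_mem_kCore_of_le {G : SimpleGraph V} {k k' : ℕ} (h : k' ≤ k) {v : V}
    (hv : v ∈ kCore G k) : v ∈ kCore G k' := by
  obtain ⟨S, hS, hvS⟩ := hv
  exact ⟨S, aux_kSupported_anti h hS, hvS⟩

lemma aux_bddAbove (G : SimpleGraph V) (v : V) : BddAbove {k | v ∈ kCore G k} := by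
  refine ⟨Fintype.card V, fun k hk => ?_⟩
  obtain ⟨S, hS, hvS⟩ := hk
  exact (hS v hvS).trans
    ((Set.ncard_le_ncard (Set.subset_univ _) (Set.toFinite _)).trans (by simp [Set.ncard_univ]))

lemma aux_zero_mem (G : SimpleGraph V) (v : V) : v ∈ kCore G 0 :=
  ⟨Set.univ, fun _ _ => Nat.zero_le _, Set.mem_univ v⟩

lemma aux_le_coreValue {G : SimpleGraph V} {v : V} {k : ℕ} (h : v ∈ kCore G k) :
    k ≤ coreValue G v := le_csSup (aux_bddAbove G v) h

lemma aux_mem_core (G : SimpleGraph V) (v : V) : v ∈ kCore G (coreValue G v) :=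
  Nat.sSup_mem ⟨0, aux_zero_mem G v⟩ (aux_bddAbove G v)

lemma aux_kSupported_mono {G G' : SimpleGraph V} (h : G' ≤ G) {k : ℕ} {S : Set V}
    (hS : kSupported G' k S) : kSupported G k S := by
  intro v hv
  refine (hS v hv).trans (Set.ncard_le_ncard ?_ (Set.toFinite _))
  exact fun u hu => ⟨hu.1, h hu.2⟩

lemma aux_coreValue_anti {G G' : SimpleGraph V} (h : G' ≤ G) (v : V) :
    coreValue G' v ≤ coreValue G v := by
  refine csSup_le ⟨0, aux_zero_mem G' v⟩ fun k hk => ?_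
  obtain ⟨S, hS, hvS⟩ := hk
  exact aux_le_coreValue ⟨S, aux_kSupported_mono h hS, hvS⟩

end aux

theorem stmt_12 {V : Type*} [Fintype V] (G : SimpleGraph V) (i j : V)
    (hij : G.Adj i j) (hC : coreValue G j ≤ coreValue G i)
    (hj : CS G j = 1) :
    coreValue (G.deleteEdges {s(i, j)}) j = coreValue G j - 1 := by
  classical
  set G' := G.deleteEdges {s(i, j)} with hG'
  have hle : G' ≤ G := G.deleteEdges_le _
  set c := coreValue G j with hc
  -- lower bound
  have hlow : c - 1 ≤ coreValue G' j := by
    refine aux_le_coreValue ⟨kCore G c, ?_, aux_mem_core G j⟩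
    intro v hv
    obtain ⟨S, hS, hvS⟩ := hv
    have hA : c ≤ {u | u ∈ S ∧ G.Adj v u}.ncard := hS v hvS
    set x := if v = i then j else i with hx
    have hsub : {u | u ∈ S ∧ G.Adj v u} ⊆ {u | u ∈ kCore G c ∧ G'.Adj v u} ∪ {x} := by
      rintro u ⟨huS, hadj⟩
      by_cases hu : G'.Adj v u
      · exact Or.inl ⟨⟨S, hS, huS⟩, hu⟩
      · right
        have hs : s(v, u) = s(i, j) := by
          by_contra h
          exact hu (by rw [hG', SimpleGraph.deleteEdges_adj]; exact ⟨hadj, by simpa using h⟩)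
        rw [Sym2.eq_iff] at hs
        rcases hs with ⟨hv1, hv2⟩ | ⟨hv1, hv2⟩
        · simp [hx, hv1, hv2]
        · have hvi : v ≠ i := by rintro rfl; exact hij.ne hv1
          simp [hx, hvi, hv2]
    have h1 : c ≤ ({u | u ∈ kCore G c ∧ G'.Adj v u} ∪ {x}).ncard :=
      hA.trans (Set.ncard_le_ncard hsub (Set.toFinite _))
    have h2 : ({u | u ∈ kCore G c ∧ G'.Adj v u} ∪ {x}).ncard ≤
        {u | u ∈ kCore G c ∧ G'.Adj v u}.ncard + 1 := by
      rw [Set.union_singleton]; exact Set.ncard_insert_le _ _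
    omega
  -- upper bound
  have hup : coreValue G' j ≤ c - 1 := by
    rcases Nat.eq_zero_or_pos c with h0 | hpos
    · have := aux_coreValue_anti hle j
      omega
    by_contra hcon
    push_neg at hcon
    have hcc : c ≤ coreValue G' j := by omega
    obtain ⟨S, hS, hjS⟩ := aux_mem_kCore_of_le hcc (aux_mem_core G' j)
    have hT : c ≤ {u | u ∈ S ∧ G'.Adj j u}.ncard := hS j hjS
    have hsub : {u | u ∈ S ∧ G'.Adj j u} ⊆ SN G j c \ {i} := by
      rintro u ⟨huS, hadj⟩
      have hGadj : G.Adj j u := hle hadj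
      have hne : u ≠ i := by
        rintro rfl
        rw [hG'] at hadj
        simp [SimpleGraph.deleteEdges_adj, Sym2.eq_swap] at hadj
      have hcu : c ≤ coreValue G u :=
        le_trans (aux_le_coreValue ⟨S, hS, huS⟩) (aux_coreValue_anti hle u)
      exact ⟨⟨hGadj, hcu⟩, hne⟩
    have hins : insert i {u | u ∈ S ∧ G'.Adj j u} ⊆ SN G j c := by
      intro u hu
      rcases hu with rfl | hu
      · exact ⟨hij.symm, hC⟩
      · exact (hsub hu).1
    have hni : i ∉ {u | u ∈ S ∧ G'.Adj j u} := fun h => (hsub h).2 rfl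
    have hcard := Set.ncard_le_ncard hins (Set.toFinite _)
    rw [Set.ncard_insert_of_notMem hni (Set.toFinite _)] at hcard
    have hcs : (SN G j c).ncard - c + 1 = 1 := hj
    omega
  omega
end
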